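/- For a filtered shifted L∞-algebra L and an MC element α ∈ L, the map β ↦ α + β defines a bijection from the set of Maurer-Cartan elements of L^α ⊗̂ Ω_n to the set of Maurer-Cartan elements of L ⊗̂ Ω_n, for every n ≥ 0, sending 0 to α. -/

import Mathlib

open scoped BigOperators

/-! # Core framework: filtered shifted `L∞`-algebras (`SLie∞`-algebras)

A filtered shifted `L∞`-algebra is modelled as a `ℤ`-graded `k`-module `L` with
degree-`1` graded-symmetric multibrackets (the differential absorbed as the unary
bracket), a complete descending filtration compatible with the brackets, and the
shifted `L∞` (Jacobi) relations expressed with Koszul signs and shuffles. -/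

/-- The Koszul sign of a permutation `σ` acting on homogeneous elements of degrees `d`. -/
def koszulSign (k : Type) [Field k] {m : ℕ} (σ : Equiv.Perm (Fin m)) (d : Fin m → ℤ) : k :=
  ∏ p ∈ Finset.univ.filter (fun p : Fin m × Fin m => p.1 < p.2 ∧ σ p.2 < σ p.1),
    (-1 : k) ^ ((d p.1) * (d p.2)).natAbs

/-- The set of `(p, m-p)`-shuffles in the symmetric group on `m` letters. -/
def shuffles (p m : ℕ) : Finset (Equiv.Perm (Fin m)) :=
  Finset.univ.filter fun σ =>
    (∀ i j : Fin m, i < j → (j : ℕ) < p → σ i < σ j) ∧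
    (∀ i j : Fin m, i < j → p ≤ (i : ℕ) → σ i < σ j)

section Front
variable {L : Type}

/-- First `p` arguments `v (σ 1), …, v (σ p)`. -/
def frontV {m p : ℕ} (hpm : p ≤ m) (v : Fin m → L) (σ : Equiv.Perm (Fin m)) : Fin p → L :=
  fun i => v (σ ⟨i, lt_of_lt_of_le i.2 hpm⟩)

/-- Remaining arguments `v (σ (p+1)), …, v (σ m)`. -/
def backV {m p : ℕ} (hpm : p ≤ m) (v : Fin m → L) (σ : Equiv.Perm (Fin m)) :
    Fin (m - p) → L :=
  fun j => v (σ ⟨p + j, by have := j.2; omega⟩)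

end Front

/-- Convergence of the series `∑ f i` to `s` ∈ the topology defined by a
descending filtration `F` by submodules. -/
def HasFSumF (k : Type) [Field k] {L : Type} [AddCommGroup L] [Module k L]
    (F : ℕ → Submodule k L) (f : ℕ → L) (s : L) : Prop :=
  ∀ n : ℕ, ∃ N : ℕ, ∀ M : ℕ, N ≤ M → s - ∑ i ∈ Finset.range M, f i ∈ F n

/-- The (choice of a) limit of a series in the filtration topology; junk value `0`
if the series does not converge. -/
noncomputable def limF (k : Type) [Field k] {L : Type} [AddCommGroup L] [Module k L]
    (F : ℕ → Submodule k L) (f : ℕ → L) : L :=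
  letI := Classical.propDecidable (∃ s, HasFSumF k F f s)
  if h : ∃ s, HasFSumF k F f s then h.choose else 0

/-- The term `ε(σ; v) ⬝ out ( inn (v_{σ(1)}, …, v_{σ(p)}), v_{σ(p+1)}, …, v_{σ(m)} )`
appearing in the shifted `L∞` relations and in the compatibility equations for
`∞`-morphisms. -/
def shTerm (k : Type) [Field k] {L L' : Type} [AddCommGroup L] [Module k L]
    [AddCommGroup L'] [Module k L']
    (inn : ∀ m : ℕ, MultilinearMap k (fun _ : Fin m => L) L)
    (out : ∀ m : ℕ, MultilinearMap k (fun _ : Fin m => L) L')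
    {m : ℕ} (v : Fin m → L) (d : Fin m → ℤ) (p : ℕ) (hpm : p ≤ m)
    (σ : Equiv.Perm (Fin m)) : L' :=
  koszulSign k σ d • out (m - p + 1) (Fin.cons (inn p (frontV hpm v σ)) (backV hpm v σ))

/-- A filtered shifted `L∞`-algebra (`SLie∞`-algebra): a `ℤ`-graded module with
degree-`1` graded-symmetric brackets (the differential is the unary bracket),
satisfying the shifted `L∞` relations, together with a complete descending
filtration `L = filt 1 ⊇ filt 2 ⊇ ⋯` compatible with the brackets. -/
structure FSLie (k : Type) [Field k] [CharZero k] (L : Type) [AddCommGroup L]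
    [Module k L] where
  /-- the grading (cochain degrees) -/
  gr : ℤ → Submodule k L
  internal : DirectSum.IsInternal gr
  /-- the multibrackets; `br 1` is the differential `∂` -/
  br : ∀ m : ℕ, MultilinearMap k (fun _ : Fin m => L) L
  br_zero : br 0 = 0
  br_degree : ∀ (m : ℕ) (v : Fin m → L) (d : Fin m → ℤ),
      (∀ i, v i ∈ gr (d i)) → br m v ∈ gr ((∑ i, d i) + 1)
  br_symm : ∀ (m : ℕ) (σ : Equiv.Perm (Fin m)) (v : Fin m → L) (d : Fin m → ℤ),
      (∀ i, v i ∈ gr (d i)) → br m (v ∘ σ) = koszulSign k σ d • br m v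
  /-- the complete descending filtration -/
  filt : ℕ → Submodule k L
  filt_zero : filt 0 = ⊤
  filt_one : filt 1 = ⊤
  filt_antitone : ∀ {i j : ℕ}, i ≤ j → filt j ≤ filt i
  filt_br : ∀ (m : ℕ) (v : Fin m → L) (w : Fin m → ℕ), 2 ≤ m →
      (∀ i, v i ∈ filt (w i)) → br m v ∈ filt (∑ i, w i)
  filt_diff : ∀ (n : ℕ) (x : L), x ∈ filt n → br 1 ![x] ∈ filt n
  hausdorff : ∀ x : L, (∀ n, x ∈ filt n) → x = 0
  complete : ∀ a : ℕ → L, (∀ n, a (n + 1) - a n ∈ filt (n + 1)) →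
      ∃ s, ∀ n, s - a n ∈ filt (n + 1)
  gr_closed : ∀ (d : ℤ) (f : ℕ → L) (s : L), (∀ n, f n ∈ gr d) →
      HasFSumF k filt f s → s ∈ gr d
  /-- the shifted `L∞` relations (with the differential absorbed as `br 1`) -/
  jacobi : ∀ (m : ℕ) (v : Fin m → L) (d : Fin m → ℤ), (∀ i, v i ∈ gr (d i)) →
      (∑ p ∈ (Finset.Icc 1 m).attach, ∑ σ ∈ shuffles p.1 m,
        shTerm k br br v d p.1 (Finset.mem_Icc.mp p.2).2 σ) = 0

section Defs
variable (k : Type) [Field k] [CharZero k] {L L' : Type} [AddCommGroup L] [Module k L]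
  [AddCommGroup L'] [Module k L']

/-- The terms of the curvature series `curv(α) = ∂α + ∑_{m ≥ 2} (1/m!) {α,…,α}`
(here `∂α = {α}` is the `m = 1` term). -/
def curvSeries (A : FSLie k L) (α : L) : ℕ → L :=
  fun m => if m = 0 then 0 else ((m.factorial : k)⁻¹) • A.br m (fun _ => α)

/-- A Maurer–Cartan element: a degree-`0` element with vanishing curvature. -/
def IsMC (A : FSLie k L) (α : L) : Prop :=
  α ∈ A.gr 0 ∧ HasFSumF k A.filt (curvSeries k A α) 0

/-- The terms of the series defining the twisted differential
`∂^α(x) = ∂x + ∑_{j ≥ 1} (1/j!) {α,…,α,x}`. -/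
def twDiffSeries (A : FSLie k L) (α x : L) : ℕ → L :=
  fun j => ((j.factorial : k)⁻¹) • A.br (j + 1) (Fin.snoc (fun _ : Fin j => α) x)

/-- The terms of the series defining the twisted brackets
`{v₁,…,v_m}^α = ∑_{j ≥ 0} (1/j!) {α,…,α,v₁,…,v_m}`. -/
def twBrSeries (A : FSLie k L) (α : L) {m : ℕ} (v : Fin m → L) : ℕ → L :=
  fun j => ((j.factorial : k)⁻¹) • A.br (j + m) (Fin.append (fun _ : Fin j => α) v)

/-- `A'` is the twist of `A` by `α`: same grading and filtration, and the brackets of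
`A'` are the sums of the twisted-bracket series of `A` at `α`. -/
def IsTwist (A A' : FSLie k L) (α : L) : Prop :=
  A'.gr = A.gr ∧ A'.filt = A.filt ∧
  ∀ (m : ℕ), 1 ≤ m → ∀ v : Fin m → L,
    HasFSumF k A.filt (twBrSeries k A α v) (A'.br m v)

end Defs

/-! ### Compositions, block shuffles, and `∞`-morphisms -/

/-- Compositions of `m` into `t` (ordered) positive parts. -/
def compositions (t m : ℕ) : Finset (Fin t → ℕ) :=
  (Fintype.piFinset fun _ : Fin t => Finset.range (m + 1)).filter
    fun c => (∀ i, 1 ≤ c i) ∧ (∑ i, c i) = m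

/-- The starting index of the `a`-th block of a composition `c`. -/
def offsetC {t : ℕ} (c : Fin t → ℕ) (a : Fin t) : ℕ :=
  ∑ i ∈ Finset.univ.filter (fun i => i < a), c i

theorem offsetC_add_lt {t m : ℕ} {c : Fin t → ℕ} (hc : c ∈ compositions t m)
    (a : Fin t) {j : ℕ} (hj : j < c a) : offsetC c a + j < m := by
  obtain ⟨-, -, hsum⟩ : c ∈ Fintype.piFinset (fun _ : Fin t => Finset.range (m+1)) ∧
      (∀ i, 1 ≤ c i) ∧ (∑ i, c i) = m := by
    simpa [compositions, and_assoc] using hc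
  have hna : a ∉ Finset.univ.filter (fun i => i < a) := by simp
  have h2 : (∑ i ∈ insert a (Finset.univ.filter (fun i => i < a)), c i) ≤ ∑ i, c i :=
    Finset.sum_le_sum_of_subset (Finset.subset_univ _)
  rw [Finset.sum_insert hna] at h2
  have h1 : offsetC c a + c a ≤ ∑ i, c i := by unfold offsetC; omega
  omega

/-- The `SH`-shuffles associated to a composition `c` of `m`: permutations that are
increasing within each block and whose values at the first elements of the blocks
are increasing. -/
def blockShuffles {t : ℕ} (c : Fin t → ℕ) (m : ℕ) : Finset (Equiv.Perm (Fin m)) :=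
  Finset.univ.filter fun σ =>
    (∀ a : Fin t, ∀ i j : Fin m, i < j → offsetC c a ≤ (i : ℕ) →
        (j : ℕ) < offsetC c a + c a → σ i < σ j) ∧
    (∀ a b : Fin t, a < b → ∀ i j : Fin m, (i : ℕ) = offsetC c a →
        (j : ℕ) = offsetC c b → σ i < σ j)

/-- The index `τ(offset(a) + j)` of the `j`-th element of the `a`-th block. -/
def blockIdx {t m : ℕ} {c : Fin t → ℕ} (hc : c ∈ compositions t m)
    (τ : Equiv.Perm (Fin m)) (a : Fin t) (j : Fin (c a)) : Fin m :=
  τ ⟨offsetC c a + j, offsetC_add_lt hc a j.2⟩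

section Mor
variable (k : Type) [Field k] [CharZero k] {L L' : Type} [AddCommGroup L] [Module k L]
  [AddCommGroup L'] [Module k L']

/-- Taylor components of a (continuous, degree-`0`, graded-symmetric) candidate
`∞`-morphism between filtered shifted `L∞`-algebras, without the compatibility
with the codifferentials. -/
structure MorData (A : FSLie k L) (B : FSLie k L') where
  T : ∀ m : ℕ, MultilinearMap k (fun _ : Fin m => L) L'
  T_zero : T 0 = 0
  T_degree : ∀ (m : ℕ) (v : Fin m → L) (d : Fin m → ℤ),
      (∀ i, v i ∈ A.gr (d i)) → T m v ∈ B.gr (∑ i, d i)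
  T_symm : ∀ (m : ℕ) (σ : Equiv.Perm (Fin m)) (v : Fin m → L) (d : Fin m → ℤ),
      (∀ i, v i ∈ A.gr (d i)) → T m (v ∘ σ) = koszulSign k σ d • T m v
  T_filt : ∀ (m : ℕ) (v : Fin m → L) (w : Fin m → ℕ),
      (∀ i, v i ∈ A.filt (w i)) → T m v ∈ B.filt (∑ i, w i)

/-- Left-hand side (the `F ∘ Q` side) of the compatibility equation of an
`∞`-morphism with the codifferentials, evaluated on `v₁ ⋯ v_m`. -/
def compLHS (A : FSLie k L) (T : ∀ m : ℕ, MultilinearMap k (fun _ : Fin m => L) L')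
    {m : ℕ} (v : Fin m → L) (d : Fin m → ℤ) : L' :=
  ∑ p ∈ (Finset.Icc 1 m).attach, ∑ σ ∈ shuffles p.1 m,
    shTerm k A.br T v d p.1 (Finset.mem_Icc.mp p.2).2 σ

/-- Right-hand side (the `Q̃ ∘ F` side) of the compatibility equation, a sum over
partitions of `{1,…,m}` encoded by compositions and `SH`-shuffles. -/
def compRHS (B : FSLie k L') (T : ∀ m : ℕ, MultilinearMap k (fun _ : Fin m => L) L')
    {m : ℕ} (v : Fin m → L) (d : Fin m → ℤ) : L' :=
  ∑ t ∈ (Finset.Icc 1 m).attach, ∑ c ∈ (compositions t.1 m).attach,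
    ∑ τ ∈ blockShuffles c.1 m,
      koszulSign k τ d •
        B.br t.1 (fun a => T (c.1 a) (fun j => v (blockIdx c.2 τ a j)))

/-- The compatibility equation of an `∞`-morphism with the codifferentials, on
homogeneous inputs `v` of degrees `d`. -/
def CompatEq (A : FSLie k L) (B : FSLie k L')
    (T : ∀ m : ℕ, MultilinearMap k (fun _ : Fin m => L) L')
    {m : ℕ} (v : Fin m → L) (d : Fin m → ℤ) : Prop :=
  compLHS k A T v d = compRHS k B T v d

/-- A (continuous) `∞`-morphism of filtered shifted `L∞`-algebras. -/
structure InfMor (A : FSLie k L) (B : FSLie k L') extends MorData k A B where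
  compat : ∀ (m : ℕ) (v : Fin m → L) (d : Fin m → ℤ),
      (∀ i, v i ∈ A.gr (d i)) → CompatEq k A B T v d

/-- The series whose sum is the pushforward `F_*(α) = ∑_{j ≥ 1} (1/j!) F'(α^j)`. -/
def pushSeries (T : ∀ m : ℕ, MultilinearMap k (fun _ : Fin m => L) L') (α : L) : ℕ → L' :=
  fun j => if j = 0 then 0 else ((j.factorial : k)⁻¹) • T j (fun _ => α)

end Mor

/-! ### Degree-indexed Taylor families, twisting and composition of enhanced morphisms -/

/-- A degree-indexed family of Taylor coefficients: the value on `v₁ ⋯ v_m` where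
`vᵢ` is (declared) homogeneous of degree `dᵢ`. -/
def Fam (k : Type) [Field k] (L L' : Type) : Type :=
  ∀ m : ℕ, (Fin m → L) → (Fin m → ℤ) → L'

section Fam
variable (k : Type) [Field k] [CharZero k] {L₁ L₂ L₃ : Type}
  [AddCommGroup L₁] [Module k L₁] [AddCommGroup L₂] [Module k L₂]
  [AddCommGroup L₃] [Module k L₃]

/-- The degree-indexed family underlying Taylor components `T`. -/
def famOf (T : ∀ m : ℕ, MultilinearMap k (fun _ : Fin m => L₁) L₂) : Fam k L₁ L₂ :=
  fun m v _ => T m v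

/-- Pushforward of a degree-`0` element along a Taylor family:
`F_*(α) = ∑_{j ≥ 1} (1/j!) F'(α^j)` (a limit in the filtration topology). -/
noncomputable def pushElD (B : FSLie k L₂) (T : Fam k L₁ L₂) (α : L₁) : L₂ :=
  limF k B.filt (fun j => if j = 0 then 0 else ((j.factorial : k)⁻¹) • T j (fun _ => α) (fun _ => 0))

/-- Twist of a Taylor family by a degree-`0` element `α` of the source:
`(F^α)'(v₁ ⋯ v_m) = ∑_{j ≥ 0} (1/j!) F'(α^j v₁ ⋯ v_m)`. -/
noncomputable def twistFamD (B : FSLie k L₂) (T : Fam k L₁ L₂) (α : L₁) : Fam k L₁ L₂ :=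
  fun m v d => limF k B.filt
    (fun j => ((j.factorial : k)⁻¹) •
      T (j + m) (Fin.append (fun _ : Fin j => α) v) (Fin.append (fun _ : Fin j => (0 : ℤ)) d))

/-- Composition of Taylor families: `(G ∘ F)'(v₁ ⋯ v_m) = ∑ ± G'(F'(b₁), …, F'(b_t))`
over partitions of `{1,…,m}` into blocks `b₁, …, b_t`. -/
def compFam (S : Fam k L₂ L₃) (T : Fam k L₁ L₂) : Fam k L₁ L₃ :=
  fun m v d =>
    ∑ t ∈ (Finset.Icc 1 m).attach, ∑ c ∈ (compositions t.1 m).attach,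
      ∑ τ ∈ blockShuffles c.1 m,
        koszulSign k τ d •
          S t.1 (fun a => T (c.1 a) (fun j => v (blockIdx c.2 τ a j))
              (fun j => d (blockIdx c.2 τ a j)))
            (fun a => ∑ j, d (blockIdx c.2 τ a j))

/-- Composition of enhanced morphisms, at the level of the underlying data
`(MC element, Taylor family)`:
`(α₃, G) ∘ (α₂, F) = (α₃ + G_*(α₂), G^{α₂} ∘ F)`. -/
noncomputable def enhComp (C : FSLie k L₃) (g : L₃ × Fam k L₂ L₃) (f : L₂ × Fam k L₁ L₂) :
    L₃ × Fam k L₁ L₃ :=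
  (g.1 + pushElD k C g.2 f.1, compFam k (twistFamD k C g.2 f.1) f.2)

end Fam
section AuxProof
set_option linter.unusedSectionVars false
variable {k : Type} [Field k] [CharZero k] {L : Type} [AddCommGroup L] [Module k L]

private lemma koszulSign_zero_deg {m : ℕ} (σ : Equiv.Perm (Fin m)) :
    koszulSign k σ (fun _ => (0 : ℤ)) = 1 := by
  unfold koszulSign
  apply Finset.prod_eq_one
  intro p _
  simp

private lemma br_perm (M : FSLie k L) {m : ℕ} (σ : Equiv.Perm (Fin m)) (v : Fin m → L)
    (hv : ∀ i, v i ∈ M.gr 0) : M.br m (v ∘ σ) = M.br m v := by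
  have := M.br_symm m σ v (fun _ => 0) hv
  rw [this, koszulSign_zero_deg, one_smul]

private lemma exists_perm {n : ℕ} (s : Finset (Fin n)) :
    ∃ σ : Equiv.Perm (Fin n), ∀ i : Fin n, σ i ∈ s ↔ (i : ℕ) < s.card := by
  classical
  have hcard : s.card ≤ n := le_trans (Finset.card_le_univ s) (by simp)
  let p : Fin n → Prop := fun i => (i : ℕ) < s.card
  have e0 : {i : Fin n // p i} ≃ Fin s.card :=
    { toFun := fun i => ⟨(i : Fin n), i.2⟩
      invFun := fun x => ⟨⟨(x : ℕ), lt_of_lt_of_le x.2 hcard⟩, x.2⟩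
      left_inv := fun i => rfl
      right_inv := fun x => rfl }
  let e1 : {i : Fin n // p i} ≃ {x // x ∈ s} := e0.trans s.equivFin.symm
  have hc : Fintype.card {i : Fin n // ¬ p i} = Fintype.card {x : Fin n // ¬ x ∈ s} := by
    rw [Fintype.card_subtype_compl, Fintype.card_subtype_compl]
    congr 1
    rw [Fintype.card_congr e1]
  let e2 : {i : Fin n // ¬ p i} ≃ {x : Fin n // ¬ x ∈ s} := Fintype.equivOfCardEq hc
  refine ⟨((Equiv.sumCompl p).symm.trans ((Equiv.sumCongr e1 e2).trans
    (Equiv.sumCompl (fun x : Fin n => x ∈ s)))), ?_⟩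
  intro i
  by_cases h : p i
  · rw [Equiv.trans_apply, Equiv.trans_apply, Equiv.sumCompl_symm_apply_of_pos h]
    simp only [Equiv.sumCongr_apply, Sum.map_inl, Equiv.sumCompl_apply_inl]
    exact iff_of_true (e1 ⟨i, h⟩).2 h
  · rw [Equiv.trans_apply, Equiv.trans_apply, Equiv.sumCompl_symm_apply_of_neg h]
    simp only [Equiv.sumCongr_apply, Sum.map_inr, Equiv.sumCompl_apply_inr]
    exact iff_of_false (e2 ⟨i, h⟩).2 h

private lemma append_const_eq {j m : ℕ} (α β : L) :
    (Fin.append (fun _ : Fin j => α) (fun _ : Fin m => β)) =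
      fun i : Fin (j + m) => if (i : ℕ) < j then α else β := by
  funext i
  by_cases h : (i : ℕ) < j <;> simp [Fin.append, Fin.addCases, h]

end AuxProof
section AuxProof2
set_option linter.unusedSectionVars false
variable {k : Type} [Field k] [CharZero k] {L : Type} [AddCommGroup L] [Module k L]

private lemma br_add_pow (M : FSLie k L) {α β : L} (hα : α ∈ M.gr 0) (hβ : β ∈ M.gr 0)
    (n : ℕ) :
    M.br n (fun _ => α + β) = ∑ j ∈ Finset.range (n + 1),
      (n.choose j) • M.br n (fun i : Fin n => if (i : ℕ) < j then α else β) := by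
  classical
  have h1 : (fun _ : Fin n => α + β) = (fun _ : Fin n => α) + (fun _ => β) := rfl
  rw [h1, MultilinearMap.map_add_univ, ← Finset.powerset_univ, Finset.sum_powerset]
  have hcu : (Finset.univ : Finset (Fin n)).card = n := by simp
  rw [hcu]
  apply Finset.sum_congr rfl
  intro j hj
  have hstep : ∀ s ∈ Finset.powersetCard j (Finset.univ : Finset (Fin n)),
      M.br n (s.piecewise (fun _ => α) (fun _ => β)) =
        M.br n (fun i : Fin n => if (i : ℕ) < j then α else β) := by
    intro s hs
    have hcard : s.card = j := (Finset.mem_powersetCard.mp hs).2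
    obtain ⟨σ, hσ⟩ := exists_perm s
    have hv : ∀ i, s.piecewise (fun _ => α) (fun _ => β) i ∈ M.gr 0 := by
      intro i
      by_cases h : i ∈ s <;> simp [Finset.piecewise, h, hα, hβ]
    have hcomp : (s.piecewise (fun _ => α) (fun _ => β)) ∘ σ =
        fun i : Fin n => if (i : ℕ) < j then α else β := by
      funext i
      have := hσ i
      rw [hcard] at this
      by_cases h : (i : ℕ) < j
      · simp [Finset.piecewise, Function.comp, this.mpr h, h]
      · have : σ i ∉ s := fun hm => h (this.mp hm)
        simp [Finset.piecewise, Function.comp, this, h]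
    rw [← hcomp, br_perm M σ _ hv]
  rw [Finset.sum_congr rfl hstep, Finset.sum_const, Finset.card_powersetCard, hcu]

end AuxProof2
section AuxProof3
set_option linter.unusedSectionVars false
variable {k : Type} [Field k] [CharZero k] {L : Type} [AddCommGroup L] [Module k L]

/-- The term `(1/(j! m!)) {α^j, β^m}`. -/
private noncomputable def cT (k : Type) [Field k] [CharZero k] {L : Type} [AddCommGroup L]
    [Module k L] (M : FSLie k L) (α β : L) (j m : ℕ) : L :=
  ((j.factorial * m.factorial : ℕ) : k)⁻¹ •
    M.br (j + m) (fun i : Fin (j + m) => if (i : ℕ) < j then α else β)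

private lemma cT_eq (M : FSLie k L) (α β : L) {j m n : ℕ} (h : j + m = n) :
    cT k M α β j m = ((j.factorial * m.factorial : ℕ) : k)⁻¹ •
      M.br n (fun i : Fin n => if (i : ℕ) < j then α else β) := by
  subst h; rfl

private lemma cT_zero_zero (M : FSLie k L) (α β : L) : cT k M α β 0 0 = 0 := by
  rw [cT_eq M α β (rfl : 0 + 0 = 0), M.br_zero]
  simp

private lemma curv_add_eq (M : FSLie k L) {α β : L} (hα : α ∈ M.gr 0) (hβ : β ∈ M.gr 0)
    (n : ℕ) :
    curvSeries k M (α + β) n = ∑ j ∈ Finset.range (n + 1), cT k M α β j (n - j) := by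
  rcases Nat.eq_zero_or_pos n with hn | hn
  · subst hn
    simp [curvSeries, cT_zero_zero]
  · rw [curvSeries, if_neg (by omega), br_add_pow M hα hβ n, Finset.smul_sum]
    apply Finset.sum_congr rfl
    intro j hj
    have hjn : j ≤ n := by simpa using Nat.lt_succ_iff.mp (Finset.mem_range.mp hj)
    rw [cT_eq M α β (by omega : j + (n - j) = n)]
    rw [← Nat.cast_smul_eq_nsmul k (n.choose j), smul_smul]
    congr 1
    have h2 : ((j.factorial * (n - j).factorial : ℕ) : k) ≠ 0 := by
      simp [Nat.factorial_ne_zero]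
    have h3 : ((n.factorial : ℕ) : k) ≠ 0 := by simp [Nat.factorial_ne_zero]
    have h4 : ((n.choose j : ℕ) : k) * ((j.factorial * (n - j).factorial : ℕ) : k)
        = ((n.factorial : ℕ) : k) := by
      rw [← Nat.cast_mul]
      congr 1
      rw [← mul_assoc]
      exact Nat.choose_mul_factorial_mul_factorial hjn
    refine eq_inv_of_mul_eq_one_right ?_
    rw [mul_comm, mul_assoc, h4, inv_mul_cancel₀ h3]

private lemma curv_alpha_eq (M : FSLie k L) (α β : L) (j : ℕ) :
    curvSeries k M α j = cT k M α β j 0 := by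
  rcases Nat.eq_zero_or_pos j with hj | hj
  · subst hj
    simp [curvSeries, cT_zero_zero]
  · rw [curvSeries, if_neg (by omega)]
    show _ = ((j.factorial * Nat.factorial 0 : ℕ) : k)⁻¹ •
      M.br j (fun i : Fin j => if (i : ℕ) < j then α else β)
    have hf : (fun i : Fin j => if ((i : ℕ) < j) then α else β) = fun _ => α := by
      funext i; exact if_pos i.2
    rw [hf, Nat.factorial_zero, mul_one]

private lemma twBr_smul_eq (M : FSLie k L) (α β : L) (m j : ℕ) :
    ((m.factorial : k))⁻¹ • twBrSeries k M α (fun _ : Fin m => β) j = cT k M α β j m := by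
  rw [twBrSeries, cT, append_const_eq, smul_smul]
  congr 1
  push_cast
  rw [mul_inv]
  ring

private lemma cT_mem_filt (M : FSLie k L) (α β : L) (j m : ℕ) :
    cT k M α β j m ∈ M.filt (j + m) := by
  rcases lt_or_ge (j + m) 2 with h2 | h2
  · have h := h2
    interval_cases h3 : (j + m)
    · rw [M.filt_zero]; exact Submodule.mem_top
    · rw [M.filt_one]; exact Submodule.mem_top
  · apply Submodule.smul_mem
    have := M.filt_br (j + m) (fun i : Fin (j + m) => if (i : ℕ) < j then α else β)
      (fun _ => 1) h2 (fun i => by rw [M.filt_one]; exact Submodule.mem_top)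
    simpa using this

end AuxProof3
section AuxProof4
set_option linter.unusedSectionVars false
variable {k : Type} [Field k] [CharZero k] {L : Type} [AddCommGroup L] [Module k L]

private lemma tw_curv_approx (M Mα : FSLie k L) (α β : L) (htw : IsTwist k M Mα α)
    {m : ℕ} (hm : 1 ≤ m) (n : ℕ) :
    ∃ N : ℕ, ∀ J : ℕ, N ≤ J →
      curvSeries k Mα β m - ∑ j ∈ Finset.range J, cT k M α β j m ∈ M.filt n := by
  obtain ⟨N, hN⟩ := htw.2.2 m hm (fun _ => β) n
  refine ⟨N, fun J hJ => ?_⟩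
  have h1 := hN J hJ
  have h2 := Submodule.smul_mem (M.filt n) ((m.factorial : k))⁻¹ h1
  rw [smul_sub, Finset.smul_sum] at h2
  have h3 : curvSeries k Mα β m = ((m.factorial : k))⁻¹ • Mα.br m (fun _ => β) := by
    rw [curvSeries, if_neg (by omega)]
  rw [h3]
  have h5 : ∑ j ∈ Finset.range J, cT k M α β j m =
      ∑ j ∈ Finset.range J, ((m.factorial : k))⁻¹ • twBrSeries k M α (fun _ : Fin m => β) j :=
    Finset.sum_congr rfl (fun j _ => (twBr_smul_eq M α β m j).symm)
  rw [h5]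
  exact h2

private lemma tw_curv_mem (M Mα : FSLie k L) (α β : L) (htw : IsTwist k M Mα α)
    (m : ℕ) : curvSeries k Mα β m ∈ M.filt m := by
  rcases lt_or_ge m 2 with h2 | h2
  · interval_cases m
    · simp [curvSeries]
    · rw [M.filt_one]; exact Submodule.mem_top
  · obtain ⟨N, hN⟩ := htw.2.2 m (by omega) (fun _ => β) m
    have h1 := hN N le_rfl
    have hsum : ∑ j ∈ Finset.range N, twBrSeries k M α (fun _ : Fin m => β) j ∈ M.filt m := by
      apply Submodule.sum_mem
      intro j _
      apply Submodule.smul_mem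
      refine M.filt_antitone (by omega : m ≤ j + m) ?_
      have := M.filt_br (j + m) (Fin.append (fun _ : Fin j => α) (fun _ : Fin m => β))
        (fun _ => 1) (by omega) (fun i => by rw [M.filt_one]; exact Submodule.mem_top)
      simpa using this
    have h4 : Mα.br m (fun _ => β) ∈ M.filt m := by
      have := Submodule.add_mem (M.filt m) h1 hsum
      simpa using this
    rw [curvSeries, if_neg (by omega)]
    exact Submodule.smul_mem _ _ h4

private lemma sum_f_eq (M : FSLie k L) {α β : L} (hα : α ∈ M.gr 0) (hβ : β ∈ M.gr 0)
    (Mx : ℕ) :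
    ∑ i ∈ Finset.range Mx, curvSeries k M (α + β) i =
      ∑ m ∈ Finset.range Mx, ∑ j ∈ Finset.range (Mx - m), cT k M α β j m := by
  induction Mx with
  | zero => simp
  | succ Mx ih =>
    rw [Finset.sum_range_succ, ih, Finset.sum_range_succ (fun m =>
      ∑ j ∈ Finset.range (Mx + 1 - m), cT k M α β j m)]
    have hstep : ∀ m ∈ Finset.range Mx,
        ∑ j ∈ Finset.range (Mx + 1 - m), cT k M α β j m =
          (∑ j ∈ Finset.range (Mx - m), cT k M α β j m) + cT k M α β (Mx - m) m := by
      intro m hm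
      have hmx : m < Mx := Finset.mem_range.mp hm
      have : Mx + 1 - m = (Mx - m) + 1 := by omega
      rw [this, Finset.sum_range_succ]
    rw [Finset.sum_congr rfl hstep, Finset.sum_add_distrib]
    have hlast : ∑ j ∈ Finset.range (Mx + 1 - Mx), cT k M α β j Mx = cT k M α β 0 Mx := by
      have : Mx + 1 - Mx = 1 := by omega
      rw [this, Finset.sum_range_one]
    rw [hlast, add_assoc]
    congr 1
    have hrefl : ∑ m ∈ Finset.range (Mx + 1), cT k M α β (Mx - m) m =
        ∑ m ∈ Finset.range (Mx + 1), cT k M α β m (Mx - m) := by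
      have := Finset.sum_range_reflect (fun j => cT k M α β j (Mx - j)) (Mx + 1)
      rw [← this]
      apply Finset.sum_congr rfl
      intro m hm
      have hmx : m ≤ Mx := by have := Finset.mem_range.mp hm; omega
      congr 1 <;> omega
    rw [curv_add_eq M hα hβ Mx, ← hrefl, Finset.sum_range_succ]
    simp

end AuxProof4
section AuxProof5
set_option linter.unusedSectionVars false
variable {k : Type} [Field k] [CharZero k] {L : Type} [AddCommGroup L] [Module k L]

private lemma key_compare (M Mα : FSLie k L) (α β : L) (hα : α ∈ M.gr 0)
    (hβ : β ∈ M.gr 0) (htw : IsTwist k M Mα α) (n : ℕ) :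
    ∃ N : ℕ, ∀ Mx : ℕ, N ≤ Mx →
      (∑ i ∈ Finset.range Mx, curvSeries k M (α + β) i)
        - (∑ i ∈ Finset.range Mx, curvSeries k M α i)
        - (∑ i ∈ Finset.range Mx, curvSeries k Mα β i) ∈ M.filt n := by
  classical
  have hNm : ∀ m : ℕ, ∃ Nm : ℕ, 1 ≤ m → ∀ J : ℕ, Nm ≤ J →
      curvSeries k Mα β m - ∑ j ∈ Finset.range J, cT k M α β j m ∈ M.filt n := by
    intro m
    by_cases hm : 1 ≤ m
    · obtain ⟨Nm, hN⟩ := tw_curv_approx M Mα α β htw hm n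
      exact ⟨Nm, fun _ => hN⟩
    · exact ⟨0, fun h => absurd h hm⟩
  choose Nm hNm using hNm
  set N : ℕ := n + 1 + (Finset.range (n + 1)).sup (fun m => m + Nm m) with hNdef
  refine ⟨N, fun Mx hMx => ?_⟩
  have hMx1 : 1 ≤ Mx := by omega
  have hMxn : n ≤ Mx := by omega
  rw [sum_f_eq M hα hβ Mx]
  have hg : ∑ i ∈ Finset.range Mx, curvSeries k M α i =
      ∑ j ∈ Finset.range Mx, cT k M α β j 0 :=
    Finset.sum_congr rfl (fun j _ => curv_alpha_eq M α β j)
  rw [hg]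
  have hE : (∑ m ∈ Finset.range Mx, ∑ j ∈ Finset.range (Mx - m), cT k M α β j m)
      - (∑ j ∈ Finset.range Mx, cT k M α β j 0)
      - (∑ m ∈ Finset.range Mx, curvSeries k Mα β m) =
      ∑ m ∈ Finset.range Mx,
        ((∑ j ∈ Finset.range (Mx - m), cT k M α β j m)
          - (if m = 0 then ∑ j ∈ Finset.range Mx, cT k M α β j 0 else 0)
          - curvSeries k Mα β m) := by
    rw [Finset.sum_sub_distrib, Finset.sum_sub_distrib, Finset.sum_ite_eq' (Finset.range Mx) 0
      (fun _ => ∑ j ∈ Finset.range Mx, cT k M α β j 0),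
      if_pos (Finset.mem_range.mpr hMx1)]
  rw [hE]
  apply Submodule.sum_mem
  intro m hm
  by_cases hm0 : m = 0
  · subst hm0
    simp [curvSeries]
  · have hm1 : 1 ≤ m := by omega
    rw [if_neg hm0, sub_zero]
    rcases lt_or_ge m n with hmn | hmn
    · have hsup : m + Nm m ≤ (Finset.range (n + 1)).sup (fun m => m + Nm m) :=
        Finset.le_sup (f := fun m => m + Nm m) (Finset.mem_range.mpr (by omega))
      have hJ : Nm m ≤ Mx - m := by omega
      have h1 := hNm m hm1 (Mx - m) hJ
      have h2 : (∑ j ∈ Finset.range (Mx - m), cT k M α β j m) - curvSeries k Mα β m =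
          -(curvSeries k Mα β m - ∑ j ∈ Finset.range (Mx - m), cT k M α β j m) := by abel
      rw [h2]
      exact Submodule.neg_mem _ h1
    · refine Submodule.sub_mem _ ?_ (M.filt_antitone hmn (tw_curv_mem M Mα α β htw m))
      apply Submodule.sum_mem
      intro j _
      exact M.filt_antitone (by omega : n ≤ j + m) (cT_mem_filt M α β j m)

private lemma mc_transfer (M Mα : FSLie k L) (α β : L) (hα : α ∈ M.gr 0)
    (hβ : β ∈ M.gr 0) (hMC : HasFSumF k M.filt (curvSeries k M α) 0)
    (htw : IsTwist k M Mα α) :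
    HasFSumF k M.filt (curvSeries k Mα β) 0 ↔
      HasFSumF k M.filt (curvSeries k M (α + β)) 0 := by
  constructor
  · intro h n
    obtain ⟨N1, hN1⟩ := key_compare M Mα α β hα hβ htw n
    obtain ⟨N2, hN2⟩ := hMC n
    obtain ⟨N3, hN3⟩ := h n
    refine ⟨N1 + N2 + N3, fun Mx hMx => ?_⟩
    have e1 := hN1 Mx (by omega)
    have e2 := hN2 Mx (by omega)
    have e3 := hN3 Mx (by omega)
    have hid : (0 : L) - ∑ i ∈ Finset.range Mx, curvSeries k M (α + β) i =
        ((0 - ∑ i ∈ Finset.range Mx, curvSeries k M α i)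
          + (0 - ∑ i ∈ Finset.range Mx, curvSeries k Mα β i))
        - ((∑ i ∈ Finset.range Mx, curvSeries k M (α + β) i)
          - (∑ i ∈ Finset.range Mx, curvSeries k M α i)
          - (∑ i ∈ Finset.range Mx, curvSeries k Mα β i)) := by abel
    rw [hid]
    exact Submodule.sub_mem _ (Submodule.add_mem _ e2 e3) e1
  · intro h n
    obtain ⟨N1, hN1⟩ := key_compare M Mα α β hα hβ htw n
    obtain ⟨N2, hN2⟩ := hMC n
    obtain ⟨N3, hN3⟩ := h n
    refine ⟨N1 + N2 + N3, fun Mx hMx => ?_⟩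
    have e1 := hN1 Mx (by omega)
    have e2 := hN2 Mx (by omega)
    have e3 := hN3 Mx (by omega)
    have hid : (0 : L) - ∑ i ∈ Finset.range Mx, curvSeries k Mα β i =
        ((0 - ∑ i ∈ Finset.range Mx, curvSeries k M (α + β) i)
          - (0 - ∑ i ∈ Finset.range Mx, curvSeries k M α i))
        + ((∑ i ∈ Finset.range Mx, curvSeries k M (α + β) i)
          - (∑ i ∈ Finset.range Mx, curvSeries k M α i)
          - (∑ i ∈ Finset.range Mx, curvSeries k Mα β i)) := by abel
    rw [hid]
    exact Submodule.add_mem _ (Submodule.sub_mem _ e3 e2) e1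

end AuxProof5
theorem shift_bijection_MC
    (k : Type) [Field k] [CharZero k] (L : Type) [AddCommGroup L] [Module k L]
    (M Mα : FSLie k L) (α : L) (hMC : IsMC k M α) (htw : IsTwist k M Mα α) :
    IsMC k Mα 0 ∧
    ∃ e : {β : L // IsMC k Mα β} ≃ {γ : L // IsMC k M γ},
      (∀ β : {β : L // IsMC k Mα β}, (e β : L) = α + (β : L)) := by
  have hα : α ∈ M.gr 0 := hMC.1
  have hgr : Mα.gr = M.gr := htw.1
  have hfilt : Mα.filt = M.filt := htw.2.1
  have fwd : ∀ β : L, IsMC k Mα β → IsMC k M (α + β) := by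
    intro β hβ
    have hβ0 : β ∈ M.gr 0 := by rw [← hgr]; exact hβ.1
    refine ⟨Submodule.add_mem _ hα hβ0, ?_⟩
    have h2 : HasFSumF k M.filt (curvSeries k Mα β) 0 := by rw [← hfilt]; exact hβ.2
    exact (mc_transfer M Mα α β hα hβ0 hMC.2 htw).mp h2
  have bwd : ∀ γ : L, IsMC k M γ → IsMC k Mα (γ - α) := by
    intro γ hγ
    have hβ0 : γ - α ∈ M.gr 0 := Submodule.sub_mem _ hγ.1 hα
    refine ⟨by rw [hgr]; exact hβ0, ?_⟩
    have h1 : HasFSumF k M.filt (curvSeries k M (α + (γ - α))) 0 := by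
      rw [add_sub_cancel]; exact hγ.2
    have h2 := (mc_transfer M Mα α (γ - α) hα hβ0 hMC.2 htw).mpr h1
    rw [hfilt]
    exact h2
  constructor
  · refine ⟨Submodule.zero_mem _, ?_⟩
    have hz : ∀ i : ℕ, curvSeries k Mα (0 : L) i = 0 := by
      intro i
      cases i with
      | zero => simp [curvSeries]
      | succ i =>
        have h0 : (fun _ : Fin (i + 1) => (0 : L)) = 0 := rfl
        simp [curvSeries, h0]
    intro n
    refine ⟨0, fun Mx _ => ?_⟩
    simp [hz, Submodule.zero_mem]
  · refine ⟨⟨fun β => ⟨α + β.1, fwd β.1 β.2⟩, fun γ => ⟨γ.1 - α, bwd γ.1 γ.2⟩, ?_, ?_⟩,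
      fun β => rfl⟩
    · intro β
      apply Subtype.ext
      show α + β.1 - α = β.1
      abel
    · intro γ
      apply Subtype.ext
      show α + (γ.1 - α) = γ.1
      abel
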